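/- arXiv:1302.2294 — 3 statements merged into one kernel-verified Lean document; each statement's English description precedes it below -/
import Mathlib

section
/- Let I be an ideal of germs of holomorphic functions at 0 in ℂⁿ with D(I) = dim_ℂ(O₀/I) finite. Then for every germ of a holomorphic curve φ : (ℂ,0) → (ℂⁿ,0), φ ≢ 0, there exists g ∈ I with ord₀(g ∘ φ) ≤ D(I) · ord₀ φ; that is, Δ₁(I,0) := sup_φ inf_{g∈I} (ord₀ φ*g)/(ord₀ φ) ≤ D(I). -/
/-!
The image of a coordinate `z_j` in the finite-dimensional algebra `O/I` is annihilated by its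
minimal polynomial `p`, of degree at most `D(I)`, so `g = p(z_j)` lies in `I`. Choosing `j` with
`ord φ_j` minimal, `g ∘ φ = p(φ_j)` has order `ord₀(p) · ord φ_j ≤ D(I) · ord φ`, since `φ_j` has
no constant term.
-/

open Polynomial

theorem PowerSeries.order_aeval_of_constantCoeff_eq_zero {R : Type*} [CommRing R] [IsDomain R]
    {p : R[X]} (hp : p ≠ 0) {f : PowerSeries R} (hf : constantCoeff f = 0) :
    (Polynomial.aeval f p).order = p.natTrailingDegree * f.order := by
  obtain ⟨q, hpq, hq⟩ := p.exists_eq_pow_rootMultiplicity_mul_and_not_dvd hp 0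
  rw [map_zero, sub_zero, rootMultiplicity_eq_natTrailingDegree'] at hpq
  rw [map_zero, sub_zero, Polynomial.X_dvd_iff] at hq
  have hq_order : (Polynomial.aeval f q).order = 0 := by
    refine not_not.mp (order_ne_zero_iff_constCoeff_eq_zero.not.mpr ?_)
    simpa [aeval_def, hom_eval₂, hf, Polynomial.coeff_zero_eq_eval_zero] using hq
  have hp_eval : Polynomial.aeval f p = f ^ p.natTrailingDegree * Polynomial.aeval f q := by
    conv_lhs => rw [hpq]
    rw [map_mul, map_pow, Polynomial.aeval_X]
  rw [hp_eval, order_mul, order_pow, nsmul_eq_mul, hq_order, add_zero]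

theorem Ideal.exists_aeval_mem_of_finiteDimensional {K A : Type*} [Field K] [CommRing A]
    [Algebra K A] (I : Ideal A) [FiniteDimensional K (A ⧸ I)] (a : A) :
    ∃ p : K[X], p ≠ 0 ∧ p.natDegree ≤ Module.finrank K (A ⧸ I) ∧ aeval a p ∈ I := by
  refine ⟨minpoly K (Ideal.Quotient.mk I a), minpoly.ne_zero (.of_finite K _),
    minpoly.natDegree_le _, ?_⟩
  rw [← Ideal.Quotient.eq_zero_iff_mem, ← Ideal.Quotient.mkₐ_eq_mk K, ← aeval_algHom_apply]
  exact minpoly.aeval K _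

/-- Let I be an ideal of holomorphic germs at 0 in ℂⁿ (represented here by polynomials)
with D(I) = dim_ℂ(O₀/I) finite. Then for every nonzero germ of a holomorphic curve
φ : (ℂ,0) → (ℂⁿ,0) (components given by power series vanishing at 0) there exists g ∈ I
with ord₀(g ∘ φ) ≤ D(I) · ord₀ φ, where ord₀ φ = min_j ord₀ φⱼ;
that is, Δ₁(I,0) ≤ D(I). -/
theorem stmt_9 (n : ℕ) (I : Ideal (MvPolynomial (Fin n) ℂ))
    (hfin : FiniteDimensional ℂ (MvPolynomial (Fin n) ℂ ⧸ I)) :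
    ∀ φ : Fin n → PowerSeries ℂ,
      (∀ j, PowerSeries.constantCoeff (φ j) = 0) → φ ≠ 0 →
      ∃ g ∈ I, (MvPolynomial.aeval φ g : PowerSeries ℂ).order ≤
        (Module.finrank ℂ (MvPolynomial (Fin n) ℂ ⧸ I) : ℕ∞) * ⨅ j, (φ j).order := by
  intro φ hconst hφ
  have : Nonempty (Fin n) := by
    by_contra h
    exact hφ (funext fun j => (h ⟨j⟩).elim)
  obtain ⟨j, hj⟩ := exists_eq_ciInf_of_finite (f := fun j => (φ j).order)
  obtain ⟨p, hp, hdeg, hmem⟩ := I.exists_aeval_mem_of_finiteDimensional (K := ℂ) (MvPolynomial.X j)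
  refine ⟨aeval (MvPolynomial.X j) p, hmem, ?_⟩
  rw [← hj, ← aeval_algHom_apply, MvPolynomial.aeval_X,
    PowerSeries.order_aeval_of_constantCoeff_eq_zero hp (hconst j)]
  gcongr
  exact_mod_cast p.natTrailingDegree_le_natDegree.trans hdeg
end

section
/- Let φ : (ℂ,0) → (ℂⁿ,0) be a nonconstant holomorphic curve germ and let r be a smooth real-valued function near 0 ∈ ℂⁿ with r(0) = 0. Define the pullback φ*r(t) = r(φ(t)). If φ*r has finite order of vanishing at 0 (as a function of t, t̄), and all pure derivatives (d/dt)^a φ*r(0) and (d/dt̄)^a φ*r(0) vanish for a up to the order, and the leading homogeneous part of the Taylor expansion of φ*r at 0 is nonnegative (plurisubharmonicity-type positivity), then the order of vanishing of φ*r at 0 is even. -/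
/-!
Real scalings `t ↦ r t` multiply `P` by `r ^ m`, so nonnegativity near `0` spreads to all of `ℂ`.
If `m` were odd, `P (-t) = -P t` would then force `P ≡ 0`.
-/

open Filter Topology Finset

theorem nonneg_of_homogeneous_of_eventually_nonneg {E : Type*} [AddCommGroup E] [Module ℝ E]
    [TopologicalSpace E] [ContinuousSMul ℝ E] {f : E → ℝ} {m : ℕ}
    (hf : ∀ (r : ℝ) x, f (r • x) = r ^ m * f x) (h0 : ∀ᶠ x in 𝓝 0, 0 ≤ f x) (x : E) :
    0 ≤ f x := by
  have hscale : Tendsto (fun r : ℝ => r • x) (𝓝[>] 0) (𝓝 0) := by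
    simpa using (tendsto_id.smul_const x).mono_left (nhdsWithin_le_nhds (a := (0 : ℝ)))
  obtain ⟨r, hr, hr0⟩ := ((hscale.eventually h0).and self_mem_nhdsWithin).exists
  rw [hf] at hr
  exact nonneg_of_mul_nonneg_right hr (pow_pos hr0 m)

theorem even_of_homogeneous_of_eventually_nonneg {E : Type*} [AddCommGroup E] [Module ℝ E]
    [TopologicalSpace E] [ContinuousSMul ℝ E] {f : E → ℝ} {m : ℕ}
    (hf : ∀ (r : ℝ) x, f (r • x) = r ^ m * f x) (h0 : ∀ᶠ x in 𝓝 0, 0 ≤ f x)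
    (hne : ∃ x, f x ≠ 0) : Even m := by
  by_contra hodd
  rw [Nat.not_even_iff_odd] at hodd
  obtain ⟨x, hx⟩ := hne
  have hneg : f (-x) = -f x := by simpa [hodd.neg_one_pow] using hf (-1) x
  have hpos := nonneg_of_homogeneous_of_eventually_nonneg hf h0 x
  have hneg_pos := nonneg_of_homogeneous_of_eventually_nonneg hf h0 (-x)
  exact hx (by linarith)

theorem sum_mul_pow_mul_conj_pow_ofReal_mul (c : ℕ → ℂ) (m : ℕ) (r : ℝ) (t : ℂ) :
    ∑ a ∈ range (m + 1), c a * (r * t) ^ a * (starRingEnd ℂ (r * t)) ^ (m - a) =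
      r ^ m * ∑ a ∈ range (m + 1), c a * t ^ a * (starRingEnd ℂ t) ^ (m - a) := by
  rw [mul_sum]
  refine sum_congr rfl fun a ha => ?_
  have ham : a ≤ m := Nat.lt_succ_iff.mp (mem_range.mp ha)
  rw [map_mul, Complex.conj_ofReal, mul_pow, mul_pow, ← pow_mul_pow_sub (r : ℂ) ham]
  ring

theorem stmt_16_general (m : ℕ) (c : ℕ → ℂ)
    (P : ℂ → ℂ)
    (hP : ∀ t, P t = ∑ a ∈ Finset.range (m + 1),
      c a * t ^ a * (starRingEnd ℂ t) ^ (m - a))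
    (hreal : ∀ t, (P t).im = 0)
    (hne : ∃ t, P t ≠ 0)
    (hnonneg : ∃ U ∈ nhds (0 : ℂ), ∀ t ∈ U, 0 ≤ (P t).re) :
    ∃ k, m = 2 * k := by
  have hom : ∀ (r : ℝ) t, (P (r • t)).re = r ^ m * (P t).re := by
    intro r t
    rw [Complex.real_smul, hP, hP, sum_mul_pow_mul_conj_pow_ofReal_mul, ← Complex.ofReal_pow,
      Complex.re_ofReal_mul]
  obtain ⟨U, hU, hUnonneg⟩ := hnonneg
  obtain ⟨t, ht⟩ := hne
  have hre : (P t).re ≠ 0 := fun h => ht (Complex.ext h (hreal t))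
  exact even_iff_two_dvd.mp
    (even_of_homogeneous_of_eventually_nonneg hom (eventually_of_mem hU hUnonneg) ⟨t, hre⟩)

/-- (Formalizable version of the parity statement for pullbacks of pseudoconvex defining
functions.) If P(t,t̄) = Σ_{a+b=m} c_{a,b} t^a t̄^b is a real-valued homogeneous polynomial
of degree m in t, t̄ with no pure terms (c₀ = c_m = 0), P ≢ 0, and P ≥ 0 on a neighborhood
of 0, then m is even. -/
theorem stmt_16 (m : ℕ) (c : ℕ → ℂ)
    (hpure0 : c 0 = 0) (hpurem : c m = 0)
    (P : ℂ → ℂ)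
    (hP : ∀ t, P t = ∑ a ∈ Finset.range (m + 1),
      c a * t ^ a * (starRingEnd ℂ t) ^ (m - a))
    (hreal : ∀ t, (P t).im = 0)
    (hne : ∃ t, P t ≠ 0)
    (hnonneg : ∃ U ∈ nhds (0 : ℂ), ∀ t ∈ U, 0 ≤ (P t).re) :
    ∃ k, m = 2 * k :=
  stmt_16_general m c P hP hreal hne hnonneg
end

section
/- Let P(t, t̄) = Σ_{a+b=m, a≥1, b≥1} c_{a,b} t^a t̄^b be a real-valued homogeneous polynomial of degree m in t and t̄ with no pure terms (no t^m or t̄^m term), P ≢ 0, and P(t, t̄) ≥ 0 for all t ∈ ℂ. Then m is even, m = 2k, and the coefficient c_{k,k} of |t|^{2k} is strictly positive. -/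
/-!
Sample `P` at the `(2m+1)`-st roots of unity `u`. Since `ū = u⁻¹` there,
`P(u) u^m = ∑ c_a u^(2a)` is a polynomial of degree `≤ 2m < 2m+1`, so the discrete Fourier
transform over the roots recovers every `c_a`. Hence `P` cannot vanish at all roots, and the mean
of `P` over them, which is `c_(m/2)` for even `m` and `0` for odd `m`, is the mean of nonnegative
numbers not all zero, so it is positive.
-/

open Finset Complex

namespace IsPrimitiveRoot

variable {R : Type*} [CommRing R] [IsDomain R] {ζ : R} {N : ℕ}

theorem sum_pow_pow_eq_ite (hζ : IsPrimitiveRoot ζ N) (e : ℕ) :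
    ∑ j ∈ range N, (ζ ^ j) ^ e = if N ∣ e then (N : R) else 0 := by
  simp_rw [pow_right_comm ζ _ e]
  split_ifs with h
  · simp [(hζ.pow_eq_one_iff_dvd e).2 h]
  · have hne : ζ ^ e ≠ 1 := mt (hζ.pow_eq_one_iff_dvd e).1 h
    refine eq_zero_of_ne_zero_of_mul_left_eq_zero (sub_ne_zero_of_ne hne) ?_
    rw [mul_geom_sum, pow_right_comm, hζ.pow_eq_one, one_pow, sub_self]

theorem sum_sum_mul_pow_sub {ι : Type*} (hζ : IsPrimitiveRoot ζ N) (S : Finset ι) (b : ι → R)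
    (e : ι → ℕ) (he : ∀ i ∈ S, e i < N) {s : ℕ} (hs : s < N) :
    ∑ j ∈ range N, (∑ i ∈ S, b i * (ζ ^ j) ^ e i) * (ζ ^ j) ^ (N - s) =
      N * ∑ i ∈ S, if e i = s then b i else 0 := by
  simp_rw [sum_mul, mul_assoc, ← pow_add]
  rw [sum_comm, mul_sum]
  refine sum_congr rfl fun i hi => ?_
  have hdvd : N ∣ e i + (N - s) ↔ e i = s := by
    refine ⟨fun h => ?_, fun h => by rw [h, Nat.add_sub_cancel' hs.le]⟩
    have := Nat.eq_of_dvd_of_lt_two_mul (by omega) h (by have := he i hi; omega)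
    omega
  rw [← mul_sum, hζ.sum_pow_pow_eq_ite]
  simp only [hdvd]
  split_ifs <;> simp [mul_comm]

end IsPrimitiveRoot

theorem sum_mul_pow_eq_of_mul_eq_one {R : Type*} [CommRing R] {u v : R} (huv : v * u = 1)
    (c : ℕ → R) (m : ℕ) :
    (∑ a ∈ range (m + 1), c a * u ^ a * v ^ (m - a)) * u ^ m =
      ∑ a ∈ range (m + 1), c a * u ^ (2 * a) := by
  rw [sum_mul]
  refine sum_congr rfl fun a ha => ?_
  obtain ⟨d, rfl⟩ := Nat.exists_eq_add_of_le (Nat.lt_succ_iff.mp (mem_range.mp ha))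
  calc c a * u ^ a * v ^ (a + d - a) * u ^ (a + d) = c a * u ^ (2 * a) * (v * u) ^ d := by
        rw [Nat.add_sub_cancel_left]; ring
    _ = c a * u ^ (2 * a) := by rw [huv, one_pow, mul_one]

theorem sum_range_ite_two_mul_eq {M : Type*} [AddCommMonoid M] (c : ℕ → M) {m s : ℕ}
    (hs : s ≤ 2 * m) :
    ∑ a ∈ range (m + 1), (if 2 * a = s then c a else 0) = if Even s then c (s / 2) else 0 := by
  split_ifs with h
  · obtain ⟨k, rfl⟩ := h
    rw [sum_eq_single k (fun a _ hak => if_neg (by omega)) (fun hk => by simp at hk; omega),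
      if_pos (by omega)]
    congr 1; omega
  · exact sum_eq_zero fun a _ => if_neg (by rintro rfl; exact h (even_two_mul a))

def homogeneousPoly (m : ℕ) (c : ℕ → ℂ) (t : ℂ) : ℂ :=
  ∑ a ∈ range (m + 1), c a * t ^ a * starRingEnd ℂ t ^ (m - a)

section RootsOfUnity

variable {m N : ℕ} {ζ : ℂ}

theorem sum_homogeneousPoly_mul_pow (hζ : IsPrimitiveRoot ζ N) (hN : 2 * m < N) (c : ℕ → ℂ)
    {s : ℕ} (hs : s ≤ 2 * m) :
    ∑ j ∈ range N, homogeneousPoly m c (ζ ^ j) * (ζ ^ j) ^ m * (ζ ^ j) ^ (N - s) =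
      N * if Even s then c (s / 2) else 0 := by
  have hunit (j : ℕ) : starRingEnd ℂ (ζ ^ j) * ζ ^ j = 1 := by
    have hroot : (ζ ^ j) ^ N = 1 := by rw [pow_right_comm, hζ.pow_eq_one, one_pow]
    rw [conj_mul', norm_eq_one_of_pow_eq_one hroot (by omega), ofReal_one, one_pow]
  simp_rw [homogeneousPoly, sum_mul_pow_eq_of_mul_eq_one (hunit _)]
  rw [hζ.sum_sum_mul_pow_sub (range (m + 1)) c (2 * ·) (fun a ha => by simp at ha; omega)
    (by omega), sum_range_ite_two_mul_eq c hs]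

theorem sum_homogeneousPoly (hζ : IsPrimitiveRoot ζ N) (hN : 2 * m < N) (c : ℕ → ℂ) :
    ∑ j ∈ range N, homogeneousPoly m c (ζ ^ j) = N * if Even m then c (m / 2) else 0 := by
  rw [← sum_homogeneousPoly_mul_pow hζ hN c (by omega)]
  refine sum_congr rfl fun j _ => ?_
  rw [mul_assoc, ← pow_add, Nat.add_sub_cancel' (by omega), pow_right_comm, hζ.pow_eq_one,
    one_pow, mul_one]

theorem homogeneousPoly_eq_zero_of_forall_pow (hζ : IsPrimitiveRoot ζ N) (hN : 2 * m < N)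
    {c : ℕ → ℂ} (h : ∀ j ∈ range N, homogeneousPoly m c (ζ ^ j) = 0) :
    homogeneousPoly m c = 0 := by
  funext t
  refine sum_eq_zero fun a ha => ?_
  have hca := sum_homogeneousPoly_mul_pow hζ hN c (s := 2 * a) (by simp at ha; omega)
  rw [sum_eq_zero fun j hj => by rw [h j hj, zero_mul, zero_mul], if_pos (even_two_mul a),
    Nat.mul_div_cancel_left a two_pos] at hca
  rw [(mul_eq_zero.mp hca.symm).resolve_left (Nat.cast_ne_zero.mpr (by omega)), zero_mul,
    zero_mul]

end RootsOfUnity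

theorem stmt_17_general (m : ℕ) (c : ℕ → ℂ)
    (P : ℂ → ℂ)
    (hP : ∀ t, P t = ∑ a ∈ Finset.range (m + 1),
      c a * t ^ a * (starRingEnd ℂ t) ^ (m - a))
    (hreal : ∀ t, (P t).im = 0)
    (hne : ∃ t, P t ≠ 0)
    (hnonneg : ∀ t, 0 ≤ (P t).re) :
    ∃ k, m = 2 * k ∧ 0 < (c k).re ∧ (c k).im = 0 := by
  obtain rfl : P = homogeneousPoly m c := funext hP
  have hN : 2 * m < 2 * m + 1 := Nat.lt_succ_self _
  obtain ⟨ζ, hζ⟩ : ∃ ζ : ℂ, IsPrimitiveRoot ζ (2 * m + 1) :=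
    ⟨_, isPrimitiveRoot_exp _ (by omega)⟩
  have hpos : 0 < ∑ j ∈ range (2 * m + 1), (homogeneousPoly m c (ζ ^ j)).re := by
    obtain ⟨j, hj, hj_ne⟩ : ∃ j ∈ range (2 * m + 1), homogeneousPoly m c (ζ ^ j) ≠ 0 := by
      by_contra! h
      obtain ⟨t, ht⟩ := hne
      exact ht (congrFun (homogeneousPoly_eq_zero_of_forall_pow hζ hN h) t)
    exact sum_pos' (fun j _ => hnonneg _)
      ⟨j, hj, (hnonneg _).lt_of_ne fun h => hj_ne (Complex.ext h.symm (hreal _))⟩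
  have hmean := sum_homogeneousPoly hζ hN c
  have hmean_re := congrArg re hmean
  have hmean_im := congrArg im hmean
  rw [re_sum, ← ofReal_natCast, re_ofReal_mul] at hmean_re
  rw [im_sum, sum_eq_zero fun j _ => hreal _, ← ofReal_natCast, im_ofReal_mul] at hmean_im
  split_ifs at hmean_re hmean_im with hm
  · obtain ⟨k, rfl⟩ := hm
    rw [show (k + k) / 2 = k by omega] at hmean_re hmean_im
    refine ⟨k, (two_mul k).symm, pos_of_mul_pos_right (hmean_re ▸ hpos) (by positivity), ?_⟩
    exact (mul_eq_zero.mp hmean_im.symm).resolve_left (by positivity)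
  · rw [zero_re, mul_zero] at hmean_re
    exact absurd hmean_re hpos.ne'

/-- Let P(t,t̄) = Σ_{a+b=m, a≥1, b≥1} c_{a,b} t^a t̄^b be a real-valued homogeneous
polynomial of degree m in t and t̄ with no pure terms, P ≢ 0, and P(t,t̄) ≥ 0 for all
t ∈ ℂ. Then m is even, m = 2k, and the coefficient c_{k,k} of |t|^{2k} is strictly
positive. (Coefficients are indexed by a, with c a standing for c_{a, m-a}.) -/
theorem stmt_17 (m : ℕ) (c : ℕ → ℂ)
    (hpure0 : c 0 = 0) (hpurem : c m = 0)
    (P : ℂ → ℂ)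
    (hP : ∀ t, P t = ∑ a ∈ Finset.range (m + 1),
      c a * t ^ a * (starRingEnd ℂ t) ^ (m - a))
    (hreal : ∀ t, (P t).im = 0)
    (hne : ∃ t, P t ≠ 0)
    (hnonneg : ∀ t, 0 ≤ (P t).re) :
    ∃ k, m = 2 * k ∧ 0 < (c k).re ∧ (c k).im = 0 :=
  stmt_17_general m c P hP hreal hne hnonneg
end
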